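/- The rotor-router algorithm started at vₙ on the path v₁,…,vₙ with any initial pointer configuration and any port labeling first visits v₁ within at most (n−1)² steps; combined with the lower bound, (n−1)² is exactly the optimal worst-case exploration time of the path by oblivious agents. -/
import Mathlib


/-- One step of the rotor-router on the path `v₁, …, vₙ` (vertices `1, …, n`).
The state is `(current vertex, pointers)`: each internal node's pointer points to
one of its two neighbors; the agent moves along the pointer, which then flips to
the other neighbor.  Endpoints send the agent to their unique neighbor. -/
def rrStep (n : ℕ) (s : ℕ × (ℕ → ℕ)) : ℕ × (ℕ → ℕ) :=
  let v := s.1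
  let π := s.2
  if v = 1 then (2, π)
  else if v = n then (n - 1, π)
  else (π v, Function.update π v (if π v = v - 1 then v + 1 else v - 1))

/-- The rotor-router walk on the path, started at vertex `n` (= `vₙ`), with
initial pointer configuration `π₀`. -/
def rrWalk (n : ℕ) (π₀ : ℕ → ℕ) : ℕ → ℕ × (ℕ → ℕ)
  | 0 => (n, π₀)
  | t + 1 => rrStep n (rrWalk n π₀ t)

def rrValid (n : ℕ) (π : ℕ → ℕ) : Prop :=
  ∀ v, 1 < v → v < n → π v = v - 1 ∨ π v = v + 1

lemma rrStep_fst_top (n : ℕ) (s : ℕ × (ℕ → ℕ)) (h1 : s.1 ≠ 1) (h : s.1 = n) :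
    (rrStep n s).1 = n - 1 := by
  have hn1 : n ≠ 1 := h ▸ h1
  simp [rrStep, h1, h, hn1]

lemma rrStep_fst_mid (n : ℕ) (s : ℕ × (ℕ → ℕ)) (h1 : s.1 ≠ 1) (h2 : s.1 ≠ n) :
    (rrStep n s).1 = s.2 s.1 := by
  simp [rrStep, h1, h2]

lemma rrStep_snd_eq (n : ℕ) (s : ℕ × (ℕ → ℕ)) (u : ℕ) (h : s.1 ≠ u) :
    (rrStep n s).2 u = s.2 u := by
  unfold rrStep
  dsimp only
  split_ifs <;> simp [Function.update_of_ne (Ne.symm h)]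

lemma rrStep_snd_mid (n : ℕ) (s : ℕ × (ℕ → ℕ)) (h1 : s.1 ≠ 1) (h2 : s.1 ≠ n) :
    (rrStep n s).2 = Function.update s.2 s.1
      (if s.2 s.1 = s.1 - 1 then s.1 + 1 else s.1 - 1) := by
  simp [rrStep, h1, h2]

lemma rrValid_step (n : ℕ) (s : ℕ × (ℕ → ℕ)) (h : rrValid n s.2) :
    rrValid n (rrStep n s).2 := by
  intro u hu1 hu2
  unfold rrStep
  dsimp only
  split_ifs with h1 h2 h3
  · exact h u hu1 hu2
  · exact h u hu1 hu2
  · rcases eq_or_ne u s.1 with rfl | hne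
    · right
      show Function.update s.2 s.1 (s.1 + 1) s.1 = s.1 + 1
      rw [Function.update_self]
    · show Function.update s.2 s.1 (s.1 + 1) u = u - 1 ∨
        Function.update s.2 s.1 (s.1 + 1) u = u + 1
      rw [Function.update_of_ne hne]
      exact h u hu1 hu2
  · rcases eq_or_ne u s.1 with rfl | hne
    · left
      show Function.update s.2 s.1 (s.1 - 1) s.1 = s.1 - 1
      rw [Function.update_self]
    · show Function.update s.2 s.1 (s.1 - 1) u = u - 1 ∨
        Function.update s.2 s.1 (s.1 - 1) u = u + 1
      rw [Function.update_of_ne hne]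
      exact h u hu1 hu2

lemma rrValid_iterate (n : ℕ) (s : ℕ × (ℕ → ℕ)) (h : rrValid n s.2) (d : ℕ) :
    rrValid n ((rrStep n)^[d] s).2 := by
  induction d with
  | zero => exact h
  | succ d ih => rw [Function.iterate_succ_apply']; exact rrValid_step n _ ih

/-- From vertex `v` (with `2 ≤ v ≤ n`), the walk reaches `v - 1` within
`2(n-v)+1` steps, staying at vertices `≥ v` in the meantime. -/
lemma rrReach (n : ℕ) (hn : 2 ≤ n) :
    ∀ k v, n - v = k → 2 ≤ v → v ≤ n → ∀ π : ℕ → ℕ, rrValid n π →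
    ∃ d ≤ 2 * (n - v) + 1,
      ((rrStep n)^[d] (v, π)).1 = v - 1 ∧
      ∀ e < d, v ≤ ((rrStep n)^[e] (v, π)).1 := by
  intro k
  induction k with
  | zero =>
    intro v hk h2 hvn π hπ
    have hv : v = n := by omega
    refine ⟨1, by omega, ?_, ?_⟩
    · rw [Function.iterate_one,
        rrStep_fst_top n (v, π) (by simpa using (by omega : v ≠ 1)) (by simpa using hv)]
      omega
    · intro e he
      interval_cases e
      simp
  | succ k ih =>
    intro v hk h2 hvn π hπ
    have hvlt : v < n := by omega
    rcases hπ v (by omega) hvlt with hL | hR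
    · refine ⟨1, by omega, ?_, ?_⟩
      · rw [Function.iterate_one, rrStep_fst_mid n (v, π) (by simpa using (by omega : v ≠ 1)) (by simpa using (by omega : v ≠ n))]
        exact hL
      · intro e he
        interval_cases e
        simp
    · set s₁ := rrStep n (v, π) with hs₁def
      have hv1 : (v, π).1 ≠ 1 := by simpa using (by omega : v ≠ 1)
      have hvn' : (v, π).1 ≠ n := by simpa using (by omega : v ≠ n)
      have hs₁1 : s₁.1 = v + 1 := by
        rw [hs₁def, rrStep_fst_mid n (v, π) hv1 hvn']
        exact hR
      have hs₁2 : s₁.2 v = v - 1 := by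
        rw [hs₁def, rrStep_snd_mid n (v, π) hv1 hvn']
        simp only
        rw [Function.update_self]
        rw [if_neg (by omega : ¬ π v = v - 1)]
      have hs₁valid : rrValid n s₁.2 := rrValid_step n (v, π) hπ
      have hs₁eq : s₁ = (v + 1, s₁.2) := by
        ext
        · exact hs₁1
        · rfl
      obtain ⟨d', hd'le, hd'pos, hd'ge⟩ :=
        ih (v + 1) (by omega) (by omega) (by omega) s₁.2 hs₁valid
      rw [← hs₁eq] at hd'pos hd'ge
      -- pointer at v stays `v - 1` during the excursion
      have hptr : ∀ e ≤ d', ((rrStep n)^[e] s₁).2 v = v - 1 := by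
        intro e
        induction e with
        | zero => intro _; exact hs₁2
        | succ e ihe =>
          intro h
          rw [Function.iterate_succ_apply']
          rw [rrStep_snd_eq]
          · exact ihe (by omega)
          · have := hd'ge e (by omega)
            omega
      set s₂ := (rrStep n)^[d'] s₁ with hs₂def
      have hs₂1 : s₂.1 = v := by
        have := hd'pos
        omega
      have hs₂2 : s₂.2 v = v - 1 := hptr d' le_rfl
      refine ⟨d' + 2, by omega, ?_, ?_⟩
      · have : (rrStep n)^[d' + 2] (v, π) = rrStep n s₂ := by
          rw [hs₂def, hs₁def]
          rw [show d' + 2 = d' + 1 + 1 from rfl, Function.iterate_succ_apply',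
            Function.iterate_succ_apply]
        rw [this, rrStep_fst_mid n s₂ (by omega) (by omega), hs₂1, hs₂2]
      · intro e he
        match e with
        | 0 => simp
        | (e' + 1) =>
          rw [Function.iterate_succ_apply, ← hs₁def]
          rcases Nat.lt_or_ge e' d' with h | h
          · have := hd'ge e' h
            omega
          · have he' : e' = d' := by omega
            rw [he', ← hs₂def, hs₂1]

/-- From any vertex `1 ≤ v ≤ n` with a valid pointer configuration, the walk
reaches vertex `1` within `(n-1)² - (n-v)²` steps (stated additively). -/
lemma rrDescend (n : ℕ) (hn : 2 ≤ n) :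
    ∀ v, 1 ≤ v → v ≤ n → ∀ π : ℕ → ℕ, rrValid n π →
    ∃ d, d + (n - v) ^ 2 ≤ (n - 1) ^ 2 ∧ ((rrStep n)^[d] (v, π)).1 = 1 := by
  intro v
  induction v with
  | zero => intro h; omega
  | succ v ih =>
    intro _ hvn π hπ
    rcases Nat.eq_or_lt_of_le (show 1 ≤ v + 1 by omega) with h1 | h1
    · have hv0 : v = 0 := by omega
      subst hv0
      exact ⟨0, by simp, by simp⟩
    · -- v + 1 ≥ 2 : first go from v+1 to v, then apply IH
      obtain ⟨d₁, hd₁le, hd₁pos, _⟩ :=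
        rrReach n hn (n - (v + 1)) (v + 1) rfl (by omega) hvn π hπ
      set s' := (rrStep n)^[d₁] (v + 1, π) with hs'def
      have hs'1 : s'.1 = v := by
        have := hd₁pos
        omega
      have hs'valid : rrValid n s'.2 := rrValid_iterate n (v + 1, π) hπ d₁
      obtain ⟨d₂, hd₂le, hd₂pos⟩ := ih (by omega) (by omega) s'.2 hs'valid
      have hs'eq : (v, s'.2) = s' := by
        ext
        · exact hs'1.symm
        · rfl
      refine ⟨d₂ + d₁, ?_, ?_⟩
      · have hm : n - v = (n - (v + 1)) + 1 := by omega
        set m := n - (v + 1) with hmdef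
        rw [hm] at hd₂le
        nlinarith [hd₂le, hd₁le]
      · rw [Function.iterate_add_apply, ← hs'def]
        rw [← hs'eq] at *
        exact hd₂pos

lemma rrWalk_eq (n : ℕ) (π₀ : ℕ → ℕ) (t : ℕ) :
    rrWalk n π₀ t = (rrStep n)^[t] (n, π₀) := by
  induction t with
  | zero => rfl
  | succ t ih => rw [rrWalk, ih, Function.iterate_succ_apply']

/-- The rotor-router started at `vₙ` on the path `v₁, …, vₙ`, with any initial
pointer configuration, first visits `v₁` within at most `(n-1)²` steps.
(Together with the matching lower bound for arbitrary oblivious agents, `(n-1)²`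
is exactly the optimal worst-case exploration time of the path.) -/
theorem rotor_router_path_upper_bound (n : ℕ) (hn : 2 ≤ n) (π₀ : ℕ → ℕ)
    (hπ : ∀ v, 1 < v → v < n → π₀ v = v - 1 ∨ π₀ v = v + 1) :
    ∃ t ≤ (n - 1) ^ 2, (rrWalk n π₀ t).1 = 1 := by
  obtain ⟨d, hdle, hdpos⟩ := rrDescend n hn n (by omega) (by omega) π₀ hπ
  refine ⟨d, by simpa using hdle, ?_⟩
  rw [rrWalk_eq]
  exact hdpos
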